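/- arXiv:1912.08471 — 2 statements merged into one kernel-verified Lean document; each statement's English description precedes it below -/
import Mathlib

section
/- Let p > 1 and let E be a real inner product space. For differentiable ω : ℝ → E with ω(t) ≠ 0, the pointwise inequality |(d/dt)(|ω|^{p/2-1}ω)|² ≤ (p²/(4(p-1))) ⟨(d/dt)(|ω|^{p-2}ω), ω'⟩ holds. -/
open scoped InnerProductSpace

/-- Lemma 8 (Magniez) in directional-derivative form: for `p > 1` and a differentiable
nonvanishing `ω : ℝ → E`,
`|(d/dt)(|ω|^{p/2-1}ω)|² ≤ (p²/(4(p-1))) ⟨(d/dt)(|ω|^{p-2}ω), ω'⟩`. -/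
theorem stmt11 (E : Type*) [NormedAddCommGroup E] [InnerProductSpace ℝ E]
    (p : ℝ) (hp : 1 < p) (ω : ℝ → E) (hω : Differentiable ℝ ω)
    (hne : ∀ s : ℝ, ω s ≠ 0) (t : ℝ) :
    ‖deriv (fun s => ‖ω s‖ ^ (p / 2 - 1) • ω s) t‖ ^ 2 ≤
      p ^ 2 / (4 * (p - 1)) *
        ⟪deriv (fun s => ‖ω s‖ ^ (p - 2) • ω s) t, deriv ω t⟫_ℝ := by
  have hd : HasDerivAt ω (deriv ω t) t := (hω t).hasDerivAt
  set r := ‖ω t‖ with hrdef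
  set a := ⟪ω t, deriv ω t⟫_ℝ with hadef
  set N := ‖deriv ω t‖ with hNdef
  have hr : 0 < r := norm_pos_iff.mpr (hne t)
  have hrne : r ≠ 0 := ne_of_gt hr
  have hinner : HasDerivAt (fun s => ⟪ω s, ω s⟫_ℝ) (2 * a) t := by
    simpa [real_inner_comm, two_mul] using hd.inner ℝ hd
  have hsq : (fun s => Real.sqrt ⟪ω s, ω s⟫_ℝ) = fun s => ‖ω s‖ := by
    funext s
    rw [real_inner_self_eq_norm_mul_norm, Real.sqrt_mul_self (norm_nonneg _)]
  have hnorm : HasDerivAt (fun s => ‖ω s‖) (a / r) t := by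
    have hne' : ⟪ω t, ω t⟫_ℝ ≠ 0 := by
      rw [real_inner_self_eq_norm_mul_norm]; positivity
    have h := hinner.sqrt hne'
    rw [hsq] at h
    convert h using 1
    rw [real_inner_self_eq_norm_mul_norm, Real.sqrt_mul_self (norm_nonneg _)]
    rw [← hrdef]
    field_simp
  have key : ∀ c : ℝ, HasDerivAt (fun s => ‖ω s‖ ^ c • ω s)
      ((a / r * c * r ^ (c - 1)) • ω t + r ^ c • deriv ω t) t := fun c => by
    have h := (hnorm.rpow_const (p := c) (Or.inl hrne)).smul hd
    rwa [add_comm] at h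
  have cauchy : a ^ 2 ≤ r ^ 2 * N ^ 2 := by
    have h := abs_real_inner_le_norm (ω t) (deriv ω t)
    rw [← hrdef, ← hadef, ← hNdef] at h
    nlinarith [abs_nonneg a, sq_abs a]
  set X := r ^ (p / 2 - 2) with hXdef
  have hXpos : 0 < X := Real.rpow_pos_of_pos hr _
  have E1 : r ^ (p / 2 - 1) = X * r := by
    rw [show p / 2 - 1 = p / 2 - 2 + 1 by ring, Real.rpow_add hr, Real.rpow_one]
  have E2 : r ^ (p - 2) = X ^ 2 * r ^ 2 := by
    rw [show p - 2 = (p / 2 - 1) + (p / 2 - 1) by ring, Real.rpow_add hr, E1]; ring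
  have E3 : r ^ (p - 3) = X ^ 2 * r := by
    rw [show p - 3 = (p / 2 - 1) + (p / 2 - 2) by ring, Real.rpow_add hr, E1, ← hXdef]
    ring
  have hL : ‖deriv (fun s => ‖ω s‖ ^ (p / 2 - 1) • ω s) t‖ ^ 2 =
      X ^ 2 * ((p / 2 - 1) ^ 2 * a ^ 2 + 2 * (p / 2 - 1) * a ^ 2 + r ^ 2 * N ^ 2) := by
    rw [(key (p / 2 - 1)).deriv, show p / 2 - 1 - 1 = p / 2 - 2 by ring, ← hXdef, E1, @norm_add_sq_real, norm_smul, norm_smul,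
      real_inner_smul_left, real_inner_smul_right, Real.norm_eq_abs, Real.norm_eq_abs,
      mul_pow, mul_pow, sq_abs, sq_abs, ← hrdef, ← hadef, ← hNdef]
    field_simp
  have hI : ⟪deriv (fun s => ‖ω s‖ ^ (p - 2) • ω s) t, deriv ω t⟫_ℝ =
      X ^ 2 * ((p - 2) * a ^ 2 + r ^ 2 * N ^ 2) := by
    rw [(key (p - 2)).deriv, show p - 2 - 1 = p - 3 by ring, inner_add_left, real_inner_smul_left, real_inner_smul_left,
      E3, E2, real_inner_self_eq_norm_mul_norm, ← hadef, ← hNdef]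
    field_simp
  rw [hL, hI, div_mul_eq_mul_div, le_div_iff₀ (by linarith : (0:ℝ) < 4 * (p - 1))]
  nlinarith [mul_nonneg (mul_nonneg (sq_nonneg X) (sq_nonneg (p - 2)))
      (sub_nonneg.2 cauchy), sq_nonneg X, hXpos.le]
end

section
/- Let p ∈ (1,2] and let ω : [0,∞) → E be twice differentiable into a real inner product space, nonvanishing, satisfying ω'' = Aω in the sense that ⟨ω_t'', ω_t⟩ ≥ 0 for all t (e.g. ω_t = e^{-t√A}ω with A nonnegative). Then t ↦ |ω_t|^p satisfies d²/dt² |ω_t|^p ≥ p(p-1)|ω_t'|²|ω_t|^{p-2} + p⟨ω_t'',ω_t⟩|ω_t|^{p-2} ≥ 0. -/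
open scoped InnerProductSpace

/-!
Differentiating twice,
`(‖ω‖^p)'' = p (‖ω'‖² + ⟪ω'', ω⟫) ‖ω‖^(p-2) + p (p-2) ⟪ω, ω'⟫² ‖ω‖^(p-4)`.
By Cauchy–Schwarz `⟪ω, ω'⟫² ‖ω‖^(p-4) ≤ ‖ω'‖² ‖ω‖^(p-2)`, and since `p - 2 ≤ 0` the last term
is at least `p (p-2) ‖ω'‖² ‖ω‖^(p-2)`, which gives the first inequality.
-/

section

variable {E : Type*} [NormedAddCommGroup E] [InnerProductSpace ℝ E]

theorem HasDerivAt.norm_rpow {ω : ℝ → E} {ω' : E} {t : ℝ} (hω : HasDerivAt ω ω' t)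
    (h0 : ω t ≠ 0) (q : ℝ) :
    HasDerivAt (fun s => ‖ω s‖ ^ q) (q * ⟪ω t, ω'⟫_ℝ * ‖ω t‖ ^ (q - 2)) t := by
  have hsq : ∀ (x : E) (r : ℝ), ‖x‖ ^ r = (‖x‖ ^ 2) ^ (r / 2) := fun x r => by
    rw [← Real.rpow_natCast_mul (norm_nonneg x)]; ring_nf
  have h := hω.norm_sq.rpow_const (p := q / 2) (Or.inl (by positivity))
  simp only [← hsq] at h
  convert h using 1
  rw [hsq (ω t) (q - 2), sub_div, div_self two_ne_zero]
  ring

theorem real_inner_sq_mul_norm_rpow_le (x y : E) (q : ℝ) :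
    ⟪x, y⟫_ℝ ^ 2 * ‖x‖ ^ (q - 4) ≤ ‖y‖ ^ 2 * ‖x‖ ^ (q - 2) := by
  rcases eq_or_ne x 0 with rfl | hx
  · rw [inner_zero_left, norm_zero, zero_pow two_ne_zero, zero_mul]
    exact mul_nonneg (sq_nonneg _) (Real.rpow_nonneg le_rfl _)
  have hcs : ⟪x, y⟫_ℝ ^ 2 ≤ ‖x‖ ^ 2 * ‖y‖ ^ 2 := by
    rw [← sq_abs, ← mul_pow]
    exact pow_le_pow_left₀ (abs_nonneg _) (abs_real_inner_le_norm x y) 2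
  have hpow : ‖x‖ ^ (q - 2) = ‖x‖ ^ (q - 4) * ‖x‖ ^ 2 := by
    rw [← Real.rpow_add_natCast (norm_ne_zero_iff.mpr hx)]
    ring_nf
  rw [hpow]
  nlinarith [Real.rpow_nonneg (norm_nonneg x) (q - 4)]

theorem deriv_deriv_norm_rpow {ω : ℝ → E} (hω : Differentiable ℝ ω)
    (hω' : Differentiable ℝ (deriv ω)) (hne : ∀ s, ω s ≠ 0) (q t : ℝ) :
    deriv (deriv fun s => ‖ω s‖ ^ q) t =
      q * (‖deriv ω t‖ ^ 2 + ⟪deriv (deriv ω) t, ω t⟫_ℝ) * ‖ω t‖ ^ (q - 2) +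
        q * (q - 2) * ⟪ω t, deriv ω t⟫_ℝ ^ 2 * ‖ω t‖ ^ (q - 4) := by
  have hD : deriv (fun s => ‖ω s‖ ^ q) = fun s => q * ⟪ω s, deriv ω s⟫_ℝ * ‖ω s‖ ^ (q - 2) :=
    funext fun s => ((hω s).hasDerivAt.norm_rpow (hne s) q).deriv
  have h := (((hω t).hasDerivAt.inner ℝ (hω' t).hasDerivAt).const_mul q).mul
    ((hω t).hasDerivAt.norm_rpow (hne t) (q - 2))
  rw [hD]
  refine h.deriv.trans ?_
  rw [real_inner_self_eq_norm_sq, real_inner_comm (ω t), show q - 2 - 2 = q - 4 by ring]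
  ring

end

/-- Inequality (equaequa)/(posig): for `p ∈ (1,2]` and a twice differentiable nonvanishing
`ω : ℝ → E` with `⟨ω'' t, ω t⟩ ≥ 0` for `t ≥ 0`,
`d²/dt² ‖ω t‖^p ≥ p(p-1)‖ω' t‖²‖ω t‖^{p-2} + p⟨ω'' t, ω t⟩‖ω t‖^{p-2} ≥ 0`. -/
theorem stmt16 (E : Type*) [NormedAddCommGroup E] [InnerProductSpace ℝ E]
    (p : ℝ) (hp1 : 1 < p) (hp2 : p ≤ 2)
    (ω : ℝ → E) (hω : ContDiff ℝ 2 ω) (hne : ∀ t : ℝ, ω t ≠ 0)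
    (hconv : ∀ t : ℝ, 0 ≤ t → 0 ≤ ⟪deriv (deriv ω) t, ω t⟫_ℝ)
    (t : ℝ) (ht : 0 ≤ t) :
    p * (p - 1) * ‖deriv ω t‖ ^ 2 * ‖ω t‖ ^ (p - 2) +
          p * ⟪deriv (deriv ω) t, ω t⟫_ℝ * ‖ω t‖ ^ (p - 2) ≤
        deriv (deriv (fun s => ‖ω s‖ ^ p)) t ∧
      0 ≤ p * (p - 1) * ‖deriv ω t‖ ^ 2 * ‖ω t‖ ^ (p - 2) +
            p * ⟪deriv (deriv ω) t, ω t⟫_ℝ * ‖ω t‖ ^ (p - 2) := by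
  obtain ⟨hω1, -, hω2⟩ := contDiff_succ_iff_deriv (n := 1).mp hω
  have hcs := mul_le_mul_of_nonneg_left (real_inner_sq_mul_norm_rpow_le (ω t) (deriv ω t) p)
    (by nlinarith : 0 ≤ p * (2 - p))
  refine ⟨?_, ?_⟩
  · rw [deriv_deriv_norm_rpow hω1 (hω2.differentiable one_ne_zero) hne]
    linarith
  · have hp : 0 ≤ p * (p - 1) := by nlinarith
    have hI := hconv t ht
    positivity
end
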